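/- arXiv:0709.1047 — 3 statements merged into one kernel-verified Lean document; each statement's English description precedes it below -/
import Mathlib

section
/- Let R be an oriented graph on N vertices with δ(R) + δ⁺(R) + δ⁻(R) ≥ (3/2 + α)N for some α > 0. If X is a nonempty subset of the vertices of R with |X| ≤ (1 − α)N, then |N⁺(X)| ≥ |X| + αN/2, where N⁺(X) is the set of all out-neighbours of vertices in X. -/
/-!
Split the vertices into `A = X \ N⁺(X)`, `B = X ∩ N⁺(X)`, `Q = N⁺(X) \ X` and the rest `Z`, and
suppose `|N⁺(X)| < |X| + αN/2`, so that `|Q| < |A| + αN/2`. A vertex of `A` has no neighbour in `A`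
and no in-neighbour in `X`, which bounds `δ` and `δ⁻` when `A ≠ ∅`. Since an oriented graph on `B`
has a vertex of outdegree at most `(|B| - 1)/2` there, and out-neighbours of `B` lie in `B ∪ Q`, we
get `2δ⁺ + 1 ≤ |B| + 2|Q|`; dually `2δ⁻ + 1 ≤ |Z| + 2|Q|`. In each case of which parts are empty
these bounds sum to less than `(3/2 + α)N`.
-/

open Finset
open scoped Classical

noncomputable section

variable {V : Type*} [Fintype V]

/-- The outdegree of `x` in the digraph `G`. -/
def outDeg (G : V → V → Prop) (x : V) : ℕ := (univ.filter fun y => G x y).card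

/-- The indegree of `x` in the digraph `G`. -/
def inDeg (G : V → V → Prop) (x : V) : ℕ := (univ.filter fun y => G y x).card

/-- The (total) degree of `x`: the number of vertices joined to `x` by an edge. -/
def deg (G : V → V → Prop) (x : V) : ℕ := (univ.filter fun y => G x y ∨ G y x).card

/-- The minimum outdegree `δ⁺(G)`. -/
def minOutDeg (G : V → V → Prop) [Nonempty V] : ℕ := univ.inf' univ_nonempty (outDeg G)

/-- The minimum indegree `δ⁻(G)`. -/
def minInDeg (G : V → V → Prop) [Nonempty V] : ℕ := univ.inf' univ_nonempty (inDeg G)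

/-- The minimum degree `δ(G)`. -/
def minDeg (G : V → V → Prop) [Nonempty V] : ℕ := univ.inf' univ_nonempty (deg G)

/-- An oriented graph: no loops and no pair of antiparallel edges. -/
def Oriented (G : V → V → Prop) : Prop := (∀ x, ¬ G x x) ∧ ∀ x y, G x y → ¬ G y x

/-- The out-neighbourhood `N⁺(X)` of a set of vertices. -/
def outNbhd (G : V → V → Prop) (X : Finset V) : Finset V :=
  univ.filter fun y => ∃ x ∈ X, G x y

end

variable {V : Type*}

section Digraph

variable {G : V → V → Prop}

lemma Oriented.flip (hor : Oriented G) : Oriented (flip G) :=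
  ⟨hor.1, fun x y h => hor.2 y x h⟩

lemma minInDeg_eq_minOutDeg_flip [Fintype V] [Nonempty V] : minInDeg G = minOutDeg (flip G) := rfl

lemma mem_outNbhd [Fintype V] {X : Finset V} {y : V} : y ∈ outNbhd G X ↔ ∃ x ∈ X, G x y := by
  simp [outNbhd]

section MinDegreeBounds

variable [Fintype V] [Nonempty V] {v : V} {S : Finset V}

lemma minOutDeg_le_card_of_forall (h : ∀ z, G v z → z ∈ S) : minOutDeg G ≤ S.card :=
  (inf'_le _ (mem_univ v)).trans (card_le_card fun z hz => h z (by simpa using hz))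

lemma minInDeg_le_card_of_forall (h : ∀ z, G z v → z ∈ S) : minInDeg G ≤ S.card :=
  minOutDeg_le_card_of_forall (G := flip G) h

lemma minDeg_le_card_of_forall (h : ∀ z, G v z ∨ G z v → z ∈ S) : minDeg G ≤ S.card :=
  (inf'_le _ (mem_univ v)).trans (card_le_card fun z hz => h z (by simpa using hz))

lemma minDeg_lt_card (hor : Oriented G) : minDeg G < Fintype.card V := by
  obtain ⟨v⟩ := ‹Nonempty V›
  have h : minDeg G ≤ (univ.erase v).card := minDeg_le_card_of_forall (v := v) fun z hz =>
    mem_erase.2 ⟨by rintro rfl; exact hz.elim (hor.1 z) (hor.1 z), mem_univ z⟩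
  rw [card_erase_of_mem (mem_univ v), card_univ] at h
  have := Fintype.card_pos (α := V)
  omega

end MinDegreeBounds

section OrientedCounting

variable {D : Finset V}

/-- Each pair of distinct vertices of `D` carries at most one edge. -/
lemma two_mul_sum_card_filter_le (hor : Oriented G) (D : Finset V) :
    2 * ∑ y ∈ D, (D.filter (G y ·)).card ≤ D.card * (D.card - 1) := by
  have hinout : ∑ y ∈ D, (D.filter (G y ·)).card = ∑ y ∈ D, (D.filter (G · y)).card :=
    sum_card_bipartiteAbove_eq_sum_card_bipartiteBelow G
  have hnbhd : ∀ y ∈ D, (D.filter (G y ·)).card + (D.filter (G · y)).card ≤ D.card - 1 := by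
    intro y hy
    rw [← card_union_of_disjoint (disjoint_filter.2 fun z _ h h' => hor.2 y z h h'),
      ← filter_or, ← card_erase_of_mem hy]
    exact card_le_card fun z hz => by
      obtain ⟨hzD, hG⟩ := mem_filter.1 hz
      exact mem_erase.2 ⟨by rintro rfl; exact hG.elim (hor.1 z) (hor.1 z), hzD⟩
  calc 2 * ∑ y ∈ D, (D.filter (G y ·)).card
      = ∑ y ∈ D, ((D.filter (G y ·)).card + (D.filter (G · y)).card) := by
        rw [sum_add_distrib, ← hinout, two_mul]
    _ ≤ ∑ _y ∈ D, (D.card - 1) := sum_le_sum hnbhd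
    _ = D.card * (D.card - 1) := by rw [sum_const, smul_eq_mul]

lemma exists_two_mul_card_filter_add_one_le (hor : Oriented G) (hD : D.Nonempty) :
    ∃ y ∈ D, 2 * (D.filter (G y ·)).card + 1 ≤ D.card := by
  refine exists_le_of_sum_le hD ?_
  have hsum := two_mul_sum_card_filter_le hor D
  have hpos := hD.card_pos
  rw [sum_add_distrib, ← mul_sum, sum_const, sum_const, smul_eq_mul, smul_eq_mul]
  calc 2 * ∑ y ∈ D, (D.filter (G y ·)).card + D.card * 1
      ≤ D.card * (D.card - 1) + D.card := by omega
    _ = D.card * D.card := by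
        rw [← Nat.mul_succ, Nat.succ_eq_add_one, Nat.sub_add_cancel hpos]

/-- Some vertex of `D` has at most `(|D| - 1)/2` out-neighbours inside `D`. -/
lemma two_mul_minOutDeg_add_one_le [Fintype V] [Nonempty V] (hor : Oriented G) {Q : Finset V}
    (hD : D.Nonempty) (hDQ : ∀ y ∈ D, ∀ z, G y z → z ∈ D ∨ z ∈ Q) :
    2 * minOutDeg G + 1 ≤ D.card + 2 * Q.card := by
  obtain ⟨y, hy, hfew⟩ := exists_two_mul_card_filter_add_one_le hor hD
  have hle : minOutDeg G ≤ (D.filter (G y ·) ∪ Q).card :=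
    minOutDeg_le_card_of_forall fun z hz =>
      (hDQ y hy z hz).elim (fun hzD => mem_union_left _ (mem_filter.2 ⟨hzD, hz⟩))
        (mem_union_right _)
  have := card_union_le (D.filter (G y ·)) Q
  omega

end OrientedCounting

lemma card_sdiff_add_card_inter_add_card_sdiff_add_card_compl_union [Fintype V]
    (s t : Finset V) :
    (s \ t).card + (s ∩ t).card + (t \ s).card + (univ \ (s ∪ t)).card = Fintype.card V := by
  rw [card_sdiff_add_card_inter, add_comm s.card, card_sdiff_add_card, union_comm,
    add_comm, card_sdiff_add_card_eq_card (subset_univ _), card_univ]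

section Expansion

variable [Fintype V] [Nonempty V] {X : Finset V}

lemma minOutDeg_le_card_outNbhd (hX : X.Nonempty) : minOutDeg G ≤ (outNbhd G X).card := by
  obtain ⟨x, hx⟩ := hX
  exact minOutDeg_le_card_of_forall fun z hz => mem_outNbhd.2 ⟨x, hx, hz⟩

lemma two_mul_minOutDeg_add_one_le_inter_outNbhd (hor : Oriented G)
    (h : (X ∩ outNbhd G X).Nonempty) :
    2 * minOutDeg G + 1 ≤ (X ∩ outNbhd G X).card + 2 * (outNbhd G X \ X).card := by
  refine two_mul_minOutDeg_add_one_le hor h fun y hy z hz => ?_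
  have hzT : z ∈ outNbhd G X := mem_outNbhd.2 ⟨y, (mem_inter.1 hy).1, hz⟩
  by_cases hzX : z ∈ X
  · exact Or.inl (mem_inter.2 ⟨hzX, hzT⟩)
  · exact Or.inr (mem_sdiff.2 ⟨hzT, hzX⟩)

/-- A vertex outside `X ∪ N⁺(X)` has no in-neighbour in `X`. -/
lemma two_mul_minInDeg_add_one_le_compl (hor : Oriented G)
    (h : (univ \ (X ∪ outNbhd G X)).Nonempty) :
    2 * minInDeg G + 1 ≤ (univ \ (X ∪ outNbhd G X)).card + 2 * (outNbhd G X \ X).card := by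
  rw [minInDeg_eq_minOutDeg_flip]
  refine two_mul_minOutDeg_add_one_le hor.flip h fun w hw z hz => ?_
  have hwT : w ∉ outNbhd G X := fun hwT => (mem_sdiff.1 hw).2 (mem_union_right _ hwT)
  have hzX : z ∉ X := fun hzX => hwT (mem_outNbhd.2 ⟨z, hzX, hz⟩)
  by_cases hzT : z ∈ outNbhd G X
  · exact Or.inr (mem_sdiff.2 ⟨hzT, hzX⟩)
  · exact Or.inl (mem_sdiff.2 ⟨mem_univ z, by simp [hzX, hzT]⟩)

/-- `X \ N⁺(X)` is independent. -/
lemma minDeg_add_card_sdiff_outNbhd_le (h : (X \ outNbhd G X).Nonempty) :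
    minDeg G + (X \ outNbhd G X).card ≤ Fintype.card V := by
  obtain ⟨v, hv⟩ := h
  have hle : minDeg G ≤ (univ \ (X \ outNbhd G X)).card := by
    refine minDeg_le_card_of_forall (v := v) fun z hz => mem_sdiff.2 ⟨mem_univ z, fun hzA => ?_⟩
    rw [mem_sdiff, mem_outNbhd] at hv hzA
    exact hz.elim (fun h => hzA.2 ⟨v, hv.1, h⟩) fun h => hv.2 ⟨z, hzA.1, h⟩
  rw [card_univ_sdiff] at hle
  have := card_le_univ (X \ outNbhd G X)
  omega

lemma minInDeg_add_card_le_of_sdiff_outNbhd_nonempty (h : (X \ outNbhd G X).Nonempty) :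
    minInDeg G + X.card ≤ Fintype.card V := by
  obtain ⟨v, hv⟩ := h
  have hle : minInDeg G ≤ (univ \ X).card :=
    minInDeg_le_card_of_forall (v := v) fun z hz =>
      mem_sdiff.2 ⟨mem_univ z, fun hzX => (mem_sdiff.1 hv).2 (mem_outNbhd.2 ⟨z, hzX, hz⟩)⟩
  rw [card_univ_sdiff] at hle
  have := card_le_univ X
  omega

end Expansion

end Digraph

/-- Here `d, dp, dm` stand for `δ, δ⁺, δ⁻` and `a, b, q, z` for the sizes of `X \ N⁺(X)`,
`X ∩ N⁺(X)`, `N⁺(X) \ X` and `V \ (X ∪ N⁺(X))`. -/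
lemma expansion_of_part_bounds {a b q z d dp dm : ℕ} {α : ℝ} (hα : 0 < α)
    (hdeg : (3 / 2 + α) * (a + b + q + z : ℝ) ≤ d + dp + dm)
    (hX : 0 < a + b) (hXle : (a + b : ℝ) ≤ (1 - α) * (a + b + q + z))
    (hd : d < a + b + q + z) (hdp : dp ≤ b + q)
    (hB : 0 < b → 2 * dp + 1 ≤ b + 2 * q) (hZ : 0 < z → 2 * dm + 1 ≤ z + 2 * q)
    (hA : 0 < a → d + a ≤ a + b + q + z ∧ dm + (a + b) ≤ a + b + q + z) :
    (a + b : ℝ) + α * (a + b + q + z) / 2 ≤ b + q := by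
  by_contra! hcon
  have hdR : (d : ℝ) + 1 ≤ a + b + q + z := by exact_mod_cast hd
  have hdpR : (dp : ℝ) ≤ b + q := by exact_mod_cast hdp
  have hXR : (1 : ℝ) ≤ a + b := by exact_mod_cast hX
  have hαN : 0 < α * (a + b + q + z : ℝ) := mul_pos hα (by positivity)
  rcases Nat.eq_zero_or_pos a with rfl | ha
  · have hz : 0 < z := by
      by_contra! hz0
      obtain rfl : z = 0 := by omega
      push_cast at *
      nlinarith
    have hBR : 2 * (dp : ℝ) + 1 ≤ b + 2 * q := by exact_mod_cast hB (by omega)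
    have hZR : 2 * (dm : ℝ) + 1 ≤ z + 2 * q := by exact_mod_cast hZ hz
    push_cast at *
    linarith
  obtain ⟨hdA, hdmA⟩ := hA ha
  have hdAR : (d : ℝ) + a ≤ a + b + q + z := by exact_mod_cast hdA
  have hdmAR : (dm : ℝ) + (a + b) ≤ a + b + q + z := by exact_mod_cast hdmA
  rcases Nat.eq_zero_or_pos b with rfl | hb <;> rcases Nat.eq_zero_or_pos z with rfl | hz
  · push_cast at *
    linarith
  · have hZR : 2 * (dm : ℝ) + 1 ≤ z + 2 * q := by exact_mod_cast hZ hz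
    push_cast at *
    linarith
  · have hBR : 2 * (dp : ℝ) + 1 ≤ b + 2 * q := by exact_mod_cast hB hb
    push_cast at *
    linarith
  · have hBR : 2 * (dp : ℝ) + 1 ≤ b + 2 * q := by exact_mod_cast hB hb
    have hZR : 2 * (dm : ℝ) + 1 ≤ z + 2 * q := by exact_mod_cast hZ hz
    linarith

variable [Fintype V]

/-- Expansion from the degree condition. -/
theorem stmt2 [Nonempty V] (G : V → V → Prop) (α : ℝ) (hα : 0 < α)
    (hor : Oriented G)
    (hdeg : (3 / 2 + α) * (Fintype.card V : ℝ) ≤ (minDeg G + minOutDeg G + minInDeg G : ℝ))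
    (X : Finset V) (hX : X.Nonempty)
    (hXle : (X.card : ℝ) ≤ (1 - α) * (Fintype.card V : ℝ)) :
    (X.card : ℝ) + α * (Fintype.card V : ℝ) / 2 ≤ ((outNbhd G X).card : ℝ) := by
  set T := outNbhd G X
  have hX_parts : (X \ T).card + (X ∩ T).card = X.card := card_sdiff_add_card_inter X T
  have hT_parts : (X ∩ T).card + (T \ X).card = T.card := by
    rw [inter_comm]; exact card_inter_add_card_sdiff T X
  have hV_parts := card_sdiff_add_card_inter_add_card_sdiff_add_card_compl_union X T
  have hXR : (X.card : ℝ) = (X \ T).card + (X ∩ T).card := by exact_mod_cast hX_parts.symm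
  have hTR : (T.card : ℝ) = (X ∩ T).card + (T \ X).card := by exact_mod_cast hT_parts.symm
  have hVR : (Fintype.card V : ℝ) =
      (X \ T).card + (X ∩ T).card + (T \ X).card + (univ \ (X ∪ T)).card := by
    exact_mod_cast hV_parts.symm
  rw [hVR, hXR] at hXle
  rw [hVR] at hdeg
  rw [hXR, hTR, hVR]
  refine expansion_of_part_bounds hα hdeg (by have := hX.card_pos; omega) hXle
    (by have := minDeg_lt_card hor; omega)
    (by have : minOutDeg G ≤ T.card := minOutDeg_le_card_outNbhd hX; omega)
    (fun hb => two_mul_minOutDeg_add_one_le_inter_outNbhd hor (card_pos.1 hb))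
    (fun hz => two_mul_minInDeg_add_one_le_compl hor (card_pos.1 hz)) fun ha => ⟨?_, ?_⟩
  · have : minDeg G + (X \ T).card ≤ Fintype.card V :=
      minDeg_add_card_sdiff_outNbhd_le (card_pos.1 ha)
    omega
  · have : minInDeg G + X.card ≤ Fintype.card V :=
      minInDeg_add_card_le_of_sdiff_outNbhd_nonempty (card_pos.1 ha)
    omega
end

section
/- Let G be the oriented graph constructed as follows: for n = 4m + 3 with m odd, take disjoint vertex sets A, C of size m (each carrying a regular tournament), B of size m + 2, D of size m + 1; add all edges from A to B, B to C, C to D, D to A, and between B and D a bipartite tournament as regular as possible. Then every directed cycle of G contains at least as many vertices of D as of B. -/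
open Finset
open scoped Classical

noncomputable section

variable {V : Type*} [Fintype V]

/-- A directed cycle of `G`, given as a nonempty list of distinct vertices with
consecutive edges and an edge from the last back to the first vertex. -/
def IsCycleList (G : V → V → Prop) (l : List V) : Prop :=
  l ≠ [] ∧ l.Nodup ∧ l.Chain' G ∧ ∀ h : l ≠ [], G (l.getLast h) (l.head h)

/-!
Weight each vertex by `[x ∈ B] - [x ∈ D]` and give it the potential `[x ∈ C ∪ D]`. Every edge
`x → y` satisfies `weight x ≤ potential y - potential x`: the only edges out of `B` go into `C ∪ D`
from outside it, and edges out of `D` are the only ones along which the potential can drop.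
Around a cycle the potential differences telescope to `0`, so the total weight
`|cycle ∩ B| - |cycle ∩ D|` is at most `0`.
-/

section Potential

variable {α β : Type*} [AddCommGroup β] [PartialOrder β] [IsOrderedAddMonoid β]
  {G : α → α → Prop} {w φ : α → β}

theorem List.IsChain.sum_map_le_of_le_sub (hw : ∀ x y, G x y → w x ≤ φ y - φ x) :
    ∀ {x : α} {t : List α}, (x :: t).IsChain G →
      ((x :: t).map w).sum ≤ φ ((x :: t).getLast (by simp)) - φ x + w ((x :: t).getLast (by simp))
  | x, [], _ => by simp
  | x, y :: t, hchain => by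
    obtain ⟨hxy, hchain⟩ := List.isChain_cons_cons.mp hchain
    rw [List.getLast_cons_cons, List.map_cons, List.sum_cons]
    calc w x + ((y :: t).map w).sum
        ≤ (φ y - φ x) + (φ ((y :: t).getLast (by simp)) - φ y + w ((y :: t).getLast (by simp))) :=
          add_le_add (hw x y hxy) (hchain.sum_map_le_of_le_sub hw)
      _ = _ := by abel

theorem IsCycleList.sum_map_nonpos_of_le_sub [Fintype α] {l : List α} (hl : IsCycleList G l)
    (hw : ∀ x y, G x y → w x ≤ φ y - φ x) : (l.map w).sum ≤ 0 := by
  obtain ⟨hne, -, hchain, hclose⟩ := hl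
  obtain ⟨x, t, rfl⟩ := List.exists_cons_of_ne_nil hne
  calc ((x :: t).map w).sum
      ≤ φ ((x :: t).getLast hne) - φ x + w ((x :: t).getLast hne) :=
        List.IsChain.sum_map_le_of_le_sub hw hchain
    _ ≤ φ ((x :: t).getLast hne) - φ x + (φ x - φ ((x :: t).getLast hne)) :=
        add_le_add_right (hw _ _ (hclose hne)) _
    _ = 0 := by abel

end Potential

theorem Finset.card_inter_sub_card_inter_eq_sum {α : Type*} [DecidableEq α] (S B D : Finset α) :
    ((S ∩ B).card - (S ∩ D).card : ℤ) =
      ∑ x ∈ S, ((if x ∈ B then 1 else 0) - if x ∈ D then 1 else 0) := by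
  simp only [Finset.sum_sub_distrib, Finset.sum_boole, Finset.filter_mem_eq_inter]

theorem weight_le_potential_sub {α : Type*} [DecidableEq α] {A B C D : Finset α} {x y : α}
    (hABd : Disjoint A B) (hACd : Disjoint A C) (hBCd : Disjoint B C) (hBDd : Disjoint B D)
    (hxy : (x ∈ A ∧ y ∈ B) ∨ (x ∈ B ∧ y ∈ C) ∨ (x ∈ C ∧ y ∈ D) ∨ (x ∈ D ∧ y ∈ A) ∨
      (x ∈ A ∧ y ∈ A) ∨ (x ∈ C ∧ y ∈ C) ∨ (x ∈ B ∧ y ∈ D) ∨ (x ∈ D ∧ y ∈ B)) :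
    ((if x ∈ B then 1 else 0) - if x ∈ D then 1 else 0 : ℤ) ≤
      (if y ∈ C ∨ y ∈ D then 1 else 0) - if x ∈ C ∨ x ∈ D then 1 else 0 := by
  rw [Finset.disjoint_left] at hABd hACd hBCd hBDd
  grind

theorem stmt9_general [DecidableEq V] (G : V → V → Prop)
    (A B C D : Finset V)
    (hABd : Disjoint A B) (hACd : Disjoint A C)
    (hBCd : Disjoint B C) (hBDd : Disjoint B D)
    -- and no other edges:
    (honly : ∀ x y, G x y →
      (x ∈ A ∧ y ∈ B) ∨ (x ∈ B ∧ y ∈ C) ∨ (x ∈ C ∧ y ∈ D) ∨ (x ∈ D ∧ y ∈ A) ∨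
      (x ∈ A ∧ y ∈ A) ∨ (x ∈ C ∧ y ∈ C) ∨ (x ∈ B ∧ y ∈ D) ∨ (x ∈ D ∧ y ∈ B)) :
    ∀ l : List V, IsCycleList G l → (l.toFinset ∩ B).card ≤ (l.toFinset ∩ D).card := by
  intro l hl
  have hweight := hl.sum_map_nonpos_of_le_sub fun x y hxy =>
    weight_le_potential_sub hABd hACd hBCd hBDd (honly x y hxy)
  rw [← List.sum_toFinset _ hl.2.1, ← Finset.card_inter_sub_card_inter_eq_sum] at hweight
  omega

/-- In Häggkvist's extremal construction, every directed cycle contains at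
least as many vertices of `D` as of `B`. -/
theorem stmt9 [DecidableEq V] (m : ℕ) (hm : Odd m) (G : V → V → Prop) (hor : Oriented G)
    (A B C D : Finset V)
    (hABd : Disjoint A B) (hACd : Disjoint A C) (hADd : Disjoint A D)
    (hBCd : Disjoint B C) (hBDd : Disjoint B D) (hCDd : Disjoint C D)
    (hcover : A ∪ B ∪ C ∪ D = univ)
    (hcardA : A.card = m) (hcardB : B.card = m + 2) (hcardC : C.card = m)
    (hcardD : D.card = m + 1)
    -- all edges from A to B, B to C, C to D and D to A:
    (hAB : ∀ a ∈ A, ∀ b ∈ B, G a b) (hBC : ∀ b ∈ B, ∀ c ∈ C, G b c)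
    (hCD : ∀ c ∈ C, ∀ d ∈ D, G c d) (hDA : ∀ d ∈ D, ∀ a ∈ A, G d a)
    -- A and C carry (regular) tournaments:
    (hAtour : ∀ a ∈ A, ∀ a' ∈ A, a ≠ a' → G a a' ∨ G a' a)
    (hAreg : ∀ a ∈ A, (A.filter fun a' => G a a').card = (m - 1) / 2)
    (hCtour : ∀ c ∈ C, ∀ c' ∈ C, c ≠ c' → G c c' ∨ G c' c)
    (hCreg : ∀ c ∈ C, (C.filter fun c' => G c c').card = (m - 1) / 2)
    -- a bipartite tournament between B and D, as regular as possible: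
    (hBDtour : ∀ b ∈ B, ∀ d ∈ D, G b d ∨ G d b)
    (hBDreg : ∀ b ∈ B, (D.filter fun d => G b d).card = (m + 1) / 2)
    -- and no other edges:
    (honly : ∀ x y, G x y →
      (x ∈ A ∧ y ∈ B) ∨ (x ∈ B ∧ y ∈ C) ∨ (x ∈ C ∧ y ∈ D) ∨ (x ∈ D ∧ y ∈ A) ∨
      (x ∈ A ∧ y ∈ A) ∨ (x ∈ C ∧ y ∈ C) ∨ (x ∈ B ∧ y ∈ D) ∨ (x ∈ D ∧ y ∈ B)) :
    ∀ l : List V, IsCycleList G l → (l.toFinset ∩ B).card ≤ (l.toFinset ∩ D).card :=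
  stmt9_general G A B C D hABd hACd hBCd hBDd honly
end
end

section
/- Let R* be an oriented graph on N vertices, α > 0, with the property that |N⁺(X)| ≥ |X| + αN/2 for all nonempty X ⊆ V(R*) with |X| ≤ (1−α)N, and with δ⁻(R*) > αN. Let σ be a permutation of V(R*). Define, for a vertex x, the sets X₀ := N⁺(x) and X_{i+1} := X_i ∪ N⁺(σ⁻¹(X_i)). If X₀ ≠ ∅, then for every vertex y ≠ x we have y ∈ X_{i*} where i* = ⌊2/α⌋. -/
open Finset
open scoped Classical

noncomputable section

variable {V : Type*} [Fintype V]

/-! While `X i` is at most a `(1 - α)`-fraction of the vertices, expansion of `σ⁻¹(X i)` adds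
`αN/2` new vertices, so after `⌊2/α⌋ - 1` steps some `X i` exceeds `(1 - α)N`. From then on
`σ⁻¹(X i)` is too large to miss the more than `αN` in-neighbours of `y`, so `y ∈ X (i + 1)`. -/

def OutExpanding (G : V → V → Prop) (α : ℝ) : Prop :=
  ∀ X : Finset V, X.Nonempty → (X.card : ℝ) ≤ (1 - α) * Fintype.card V →
    (X.card : ℝ) + α * Fintype.card V / 2 ≤ (outNbhd G X).card

def IsShiftedOutIteration (G : V → V → Prop) (σ : Equiv.Perm V) (X : ℕ → Finset V) : Prop :=
  ∀ i, X (i + 1) = X i ∪ outNbhd G ((X i).image σ.symm)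

theorem inDeg_le_card (G : V → V → Prop) (y : V) : inDeg G y ≤ Fintype.card V :=
  card_le_univ _

theorem mem_outNbhd_of_card_lt_card_add_inDeg {G : V → V → Prop} {S : Finset V} {y : V}
    (h : Fintype.card V < S.card + inDeg G y) : y ∈ outNbhd G S := by
  obtain ⟨v, hv⟩ :=
    inter_nonempty_of_card_lt_card_add_card (subset_univ S)
      (subset_univ (univ.filter fun z => G z y)) (by rwa [card_univ])
  rw [mem_inter, mem_filter] at hv
  exact mem_filter.2 ⟨mem_univ y, v, hv.1, hv.2.2⟩

namespace IsShiftedOutIteration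

variable {G : V → V → Prop} {σ : Equiv.Perm V} {X : ℕ → Finset V} {α : ℝ}

theorem monotone (hX : IsShiftedOutIteration G σ X) : Monotone X :=
  monotone_nat_of_le_succ fun i => by rw [hX i]; exact subset_union_left

theorem mem_succ_of_card_lt_card_add_inDeg (hX : IsShiftedOutIteration G σ X) {i : ℕ} {y : V}
    (h : Fintype.card V < (X i).card + inDeg G y) : y ∈ X (i + 1) := by
  rw [hX i]
  refine mem_union_right _ (mem_outNbhd_of_card_lt_card_add_inDeg ?_)
  rwa [card_image_of_injective _ σ.symm.injective]

theorem card_add_le_card_succ (hX : IsShiftedOutIteration G σ X) (hexp : OutExpanding G α)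
    {i : ℕ} (hne : (X i).Nonempty) (hsmall : ((X i).card : ℝ) ≤ (1 - α) * Fintype.card V) :
    ((X i).card : ℝ) + α * Fintype.card V / 2 ≤ (X (i + 1)).card := by
  have hcard := card_image_of_injective (X i) σ.symm.injective
  calc ((X i).card : ℝ) + α * Fintype.card V / 2
      = ((X i).image σ.symm).card + α * Fintype.card V / 2 := by rw [hcard]
    _ ≤ (outNbhd G ((X i).image σ.symm)).card := hexp _ (hne.image _) (by rwa [hcard])
    _ ≤ (X (i + 1)).card := by rw [hX i]; exact_mod_cast card_le_card subset_union_right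

theorem one_add_mul_le_card (hX : IsShiftedOutIteration G σ X) (hexp : OutExpanding G α)
    (hne : (X 0).Nonempty) :
    ∀ i, (∀ j < i, ((X j).card : ℝ) ≤ (1 - α) * Fintype.card V) →
      1 + i * (α * Fintype.card V / 2) ≤ (X i).card
  | 0, _ => by simpa using hne.card_pos
  | i + 1, hsmall => by
    have ih := hX.one_add_mul_le_card hexp hne i fun j hj => hsmall j (hj.trans i.lt_succ_self)
    have hstep := hX.card_add_le_card_succ hexp (hne.mono (hX.monotone i.zero_le))
      (hsmall i i.lt_succ_self)
    push_cast
    linarith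

theorem exists_le_lt_card (hX : IsShiftedOutIteration G σ X) (hexp : OutExpanding G α)
    (hne : (X 0).Nonempty) {k : ℕ}
    (hk : (1 - α) * Fintype.card V < 1 + k * (α * Fintype.card V / 2)) :
    ∃ i ≤ k, (1 - α) * Fintype.card V < (X i).card := by
  by_contra! hsmall
  have := hX.one_add_mul_le_card hexp hne k fun j hj => hsmall j hj.le
  linarith [hsmall k le_rfl]

end IsShiftedOutIteration

theorem one_sub_mul_lt_one_add_pred_floor_mul {α : ℝ} (hα : 0 < α) (hk : 1 ≤ ⌊2 / α⌋₊) (N : ℕ) :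
    (1 - α) * N < 1 + ((⌊2 / α⌋₊ - 1 : ℕ) : ℝ) * (α * N / 2) := by
  have hfloor : 2 / α - 1 < ⌊2 / α⌋₊ := by linarith [Nat.lt_floor_add_one (2 / α)]
  rw [Nat.cast_sub hk, Nat.cast_one]
  calc (1 - α) * N = (2 / α - 2) * (α * N / 2) := by field_simp
    _ ≤ (⌊2 / α⌋₊ - 1) * (α * N / 2) := mul_le_mul_of_nonneg_right (by linarith) (by positivity)
    _ < 1 + (⌊2 / α⌋₊ - 1) * (α * N / 2) := by linarith

theorem stmt11_general (G : V → V → Prop) (α : ℝ) (hα : 0 < α)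
    (hexp : ∀ X : Finset V, X.Nonempty → (X.card : ℝ) ≤ (1 - α) * (Fintype.card V : ℝ) →
      (X.card : ℝ) + α * (Fintype.card V : ℝ) / 2 ≤ ((outNbhd G X).card : ℝ))
    (hin : ∀ v : V, α * (Fintype.card V : ℝ) < (inDeg G v : ℝ))
    (σ : Equiv.Perm V) (x : V) (X : ℕ → Finset V)
    (hXsucc : ∀ i, X (i + 1) = X i ∪ outNbhd G ((X i).image fun v => σ.symm v))
    (hne : (X 0).Nonempty) :
    ∀ y : V, y ≠ x → y ∈ X ⌊(2 : ℝ) / α⌋₊ := by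
  intro y _
  have hX : IsShiftedOutIteration G σ X := hXsucc
  have hα1 : α < 1 := by
    have : (inDeg G y : ℝ) ≤ (Fintype.card V : ℝ) := by exact_mod_cast inDeg_le_card G y
    by_contra! h
    nlinarith [hin y]
  have hk1 : 1 ≤ ⌊(2 : ℝ) / α⌋₊ := Nat.le_floor <| by rw [Nat.cast_one, one_le_div hα]; linarith
  obtain ⟨i, hik, hi⟩ :=
    hX.exists_le_lt_card hexp hne (one_sub_mul_lt_one_add_pred_floor_mul hα hk1 (Fintype.card V))
  refine hX.monotone (by omega : i + 1 ≤ ⌊(2 : ℝ) / α⌋₊) (hX.mem_succ_of_card_lt_card_add_inDeg ?_)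
  exact_mod_cast (by linarith [hin y] : (Fintype.card V : ℝ) < (X i).card + (inDeg G y : ℝ))

/-- iterating shifted out-neighbourhoods reaches every vertex `y ≠ x`
after at most `⌊2/α⌋` steps. -/
theorem stmt11 [Nonempty V] (G : V → V → Prop) (α : ℝ) (hα : 0 < α)
    (hexp : ∀ X : Finset V, X.Nonempty → (X.card : ℝ) ≤ (1 - α) * (Fintype.card V : ℝ) →
      (X.card : ℝ) + α * (Fintype.card V : ℝ) / 2 ≤ ((outNbhd G X).card : ℝ))
    (hin : ∀ v : V, α * (Fintype.card V : ℝ) < (inDeg G v : ℝ))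
    (σ : Equiv.Perm V) (x : V) (X : ℕ → Finset V)
    (hX0 : X 0 = univ.filter fun y => G x y)
    (hXsucc : ∀ i, X (i + 1) = X i ∪ outNbhd G ((X i).image fun v => σ.symm v))
    (hne : (X 0).Nonempty) :
    ∀ y : V, y ≠ x → y ∈ X ⌊(2 : ℝ) / α⌋₊ :=
  stmt11_general G α hα hexp hin σ x X hXsucc hne
end
end
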